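/- Moreover, the function k_F above is independent of the choice of ξ up to μ-null sets: if ξ₁, ξ₂ ∈ L²(M, μ) both satisfy |ξᵢ(m)| = 1 μ-a.e., then |(Uξ₁)(m)|² = |(Uξ₂)(m)|² for μ-almost every m. -/

import Mathlib

/-!
If `‖ξ₂‖ ≤ ‖ξ₁‖` a.e., then `ξ₂ = f ξ₁` for a measurable multiplier `f` with `‖f‖ ≤ 1`
everywhere (the ratio `ξ₂ / ξ₁`, truncated). The covariance of `U` gives
`U ξ₂ = (f ∘ F⁻¹) U ξ₁`, hence `‖U ξ₂‖ ≤ ‖U ξ₁‖` a.e. Two unimodular vectors dominate each other,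
so their images have the same modulus a.e.
-/

open MeasureTheory

section

variable {M : Type*} [MeasurableSpace M] {𝕜 : Type*} [RCLike 𝕜]

theorem exists_measurable_norm_le_one_mul_ae_eq {μ : Measure M} {u v : M → 𝕜}
    (hu : AEMeasurable u μ) (hv : AEMeasurable v μ) (hle : ∀ᵐ m ∂μ, ‖v m‖ ≤ ‖u m‖) :
    ∃ f : M → 𝕜, Measurable f ∧ (∀ x, ‖f x‖ ≤ 1) ∧ ∀ᵐ m ∂μ, v m = f m * u m := by
  obtain ⟨g, hg, hug⟩ := hu
  obtain ⟨h, hh, hvh⟩ := hv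
  refine ⟨fun m => if ‖h m‖ ≤ ‖g m‖ then h m / g m else 0,
    Measurable.ite (measurableSet_le hh.norm hg.norm) (hh.div hg) measurable_const,
    fun x => ?_, ?_⟩
  · dsimp only
    split_ifs with hx
    · rw [norm_div]
      exact div_le_one_of_le₀ hx (norm_nonneg _)
    · simp
  · filter_upwards [hug, hvh, hle] with m hum hvm hm
    rw [hum, hvm] at hm ⊢
    rw [if_pos hm]
    rcases eq_or_ne (g m) 0 with h0 | h0
    · rw [h0, norm_zero, norm_le_zero_iff] at hm
      simp [hm, h0]
    · rw [div_mul_cancel₀ _ h0]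

/-- The paper's relation `T M_f = M_{f ∘ G} T` for bounded measurable `f`, with `G = F⁻¹`. -/
def IntertwinesMul {p : ENNReal} {μ : Measure M} (T : Lp 𝕜 p μ → Lp 𝕜 p μ) (G : M → M) :
    Prop :=
  ∀ f : M → 𝕜, Measurable f → (∃ C, ∀ x, ‖f x‖ ≤ C) →
    ∀ ξ η : Lp 𝕜 p μ, (∀ᵐ m ∂μ, (η : M → 𝕜) m = f m * (ξ : M → 𝕜) m) →
      ∀ᵐ m ∂μ, (T η : M → 𝕜) m = f (G m) * (T ξ : M → 𝕜) m

namespace IntertwinesMul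

variable {p : ENNReal} {μ : Measure M} {T : Lp 𝕜 p μ → Lp 𝕜 p μ} {G : M → M}

/- The bound `‖f‖ ≤ 1` must hold everywhere, not just a.e.: `G` need not preserve null sets,
so an a.e. bound on `f` says nothing about `f ∘ G`. -/
theorem ae_norm_le (hT : IntertwinesMul T G) {ξ η : Lp 𝕜 p μ}
    (hle : ∀ᵐ m ∂μ, ‖(η : M → 𝕜) m‖ ≤ ‖(ξ : M → 𝕜) m‖) :
    ∀ᵐ m ∂μ, ‖(T η : M → 𝕜) m‖ ≤ ‖(T ξ : M → 𝕜) m‖ := by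
  obtain ⟨f, hf, hf_le, hηξ⟩ := exists_measurable_norm_le_one_mul_ae_eq
    (Lp.aestronglyMeasurable ξ).aemeasurable (Lp.aestronglyMeasurable η).aemeasurable hle
  filter_upwards [hT f hf ⟨1, hf_le⟩ ξ η hηξ] with m hm
  rw [hm, norm_mul]
  exact mul_le_of_le_one_left (norm_nonneg _) (hf_le _)

theorem ae_norm_eq (hT : IntertwinesMul T G) {ξ η : Lp 𝕜 p μ}
    (heq : ∀ᵐ m ∂μ, ‖(ξ : M → 𝕜) m‖ = ‖(η : M → 𝕜) m‖) :
    ∀ᵐ m ∂μ, ‖(T ξ : M → 𝕜) m‖ = ‖(T η : M → 𝕜) m‖ := by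
  filter_upwards [hT.ae_norm_le (heq.mono fun _ h => h.ge),
    hT.ae_norm_le (heq.mono fun _ h => h.le)] with m h₁ h₂
  exact le_antisymm h₂ h₁

end IntertwinesMul

end

theorem kF_independent_of_vector_general {M : Type*} [MeasurableSpace M]
    (μ : Measure M) (F : M ≃ᵐ M)
    (U : Lp ℂ 2 μ ≃ₗᵢ[ℂ] Lp ℂ 2 μ)
    (hU : ∀ f : M → ℂ, Measurable f → (∃ C, ∀ x, ‖f x‖ ≤ C) →
      ∀ ξ η : Lp ℂ 2 μ, (∀ᵐ m ∂μ, (η : M → ℂ) m = f m * (ξ : M → ℂ) m) →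
        ∀ᵐ m ∂μ, (U η : M → ℂ) m = f (F.symm m) * (U ξ : M → ℂ) m)
    (ξ₁ ξ₂ : Lp ℂ 2 μ)
    (hξ₁ : ∀ᵐ m ∂μ, ‖(ξ₁ : M → ℂ) m‖ = 1) (hξ₂ : ∀ᵐ m ∂μ, ‖(ξ₂ : M → ℂ) m‖ = 1) :
    ∀ᵐ m ∂μ, ‖(U ξ₁ : M → ℂ) m‖ ^ 2 = ‖(U ξ₂ : M → ℂ) m‖ ^ 2 := by
  have hcov : IntertwinesMul (U : Lp ℂ 2 μ → Lp ℂ 2 μ) F.symm := hU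
  have hnorm : ∀ᵐ m ∂μ, ‖(ξ₁ : M → ℂ) m‖ = ‖(ξ₂ : M → ℂ) m‖ := by
    filter_upwards [hξ₁, hξ₂] with m h₁ h₂
    rw [h₁, h₂]
  filter_upwards [hcov.ae_norm_eq hnorm] with m hm
  rw [hm]

/-- k_F is independent of the choice of ξ up to μ-null sets: if ξ₁, ξ₂
both have |ξᵢ| = 1 a.e., then |(Uξ₁)(m)|² = |(Uξ₂)(m)|² for μ-almost every m. -/
theorem kF_independent_of_vector {M : Type*} [MeasurableSpace M]
    (μ : Measure M) [IsFiniteMeasure μ] (F : M ≃ᵐ M)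
    (U : Lp ℂ 2 μ ≃ₗᵢ[ℂ] Lp ℂ 2 μ)
    (hU : ∀ f : M → ℂ, Measurable f → (∃ C, ∀ x, ‖f x‖ ≤ C) →
      ∀ ξ η : Lp ℂ 2 μ, (∀ᵐ m ∂μ, (η : M → ℂ) m = f m * (ξ : M → ℂ) m) →
        ∀ᵐ m ∂μ, (U η : M → ℂ) m = f (F.symm m) * (U ξ : M → ℂ) m)
    (ξ₁ ξ₂ : Lp ℂ 2 μ)
    (hξ₁ : ∀ᵐ m ∂μ, ‖(ξ₁ : M → ℂ) m‖ = 1) (hξ₂ : ∀ᵐ m ∂μ, ‖(ξ₂ : M → ℂ) m‖ = 1) :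
    ∀ᵐ m ∂μ, ‖(U ξ₁ : M → ℂ) m‖ ^ 2 = ‖(U ξ₂ : M → ℂ) m‖ ^ 2 :=
  kF_independent_of_vector_general μ F U hU ξ₁ ξ₂ hξ₁ hξ₂
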